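/- Let R be a commutative unital ring, E a graph, e_0 ∈ E^1 an edge, and n a positive integer. Then L_R(E(r(e_0), n)) ≅ L_R(E(e_0, n)), where E(e_0, n) is the graph obtained from E by replacing the edge e_0 by a path of length n+1 through n new vertices, and E(r(e_0), n) is the graph obtained from E by attaching a head of length n at the vertex r(e_0). -/

import Mathlib

noncomputable section

structure DGraph : Type 1 where
  V : Type
  E : Type
  s : E → V
  r : E → V

namespace DGraph

variable (R : Type) [CommRing R]

inductive Gen (G : DGraph) : Type
  | vert : G.V → Gen G
  | edge : G.E → Gen G
  | ghost : G.E → Gen G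

abbrev FA (G : DGraph) := FreeAlgebra R (Gen G)

def gv (G : DGraph) (v : G.V) : FA R G := FreeAlgebra.ι R (Gen.vert v)
def ge (G : DGraph) (e : G.E) : FA R G := FreeAlgebra.ι R (Gen.edge e)
def gg (G : DGraph) (e : G.E) : FA R G := FreeAlgebra.ι R (Gen.ghost e)

/-- A vertex is regular if it emits a finite nonzero number of edges. -/
def IsRegular (G : DGraph) (v : G.V) : Prop :=
  {e : G.E | G.s e = v}.Finite ∧ {e : G.E | G.s e = v}.Nonempty

open Classical in
/-- The Leavitt path algebra relations. -/
inductive LRel (G : DGraph) : FA R G → FA R G → Prop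
  | vmul (u v : G.V) : LRel G (gv R G u * gv R G v) (if u = v then gv R G u else 0)
  | se (e : G.E) : LRel G (gv R G (G.s e) * ge R G e) (ge R G e)
  | er (e : G.E) : LRel G (ge R G e * gv R G (G.r e)) (ge R G e)
  | rg (e : G.E) : LRel G (gv R G (G.r e) * gg R G e) (gg R G e)
  | gs (e : G.E) : LRel G (gg R G e * gv R G (G.s e)) (gg R G e)
  | ck1 (e f : G.E) : LRel G (gg R G e * ge R G f) (if e = f then gv R G (G.r e) else 0)
  | ck2 (v : G.V) (h : IsRegular G v) :
      LRel G (h.1.toFinset.sum fun e => ge R G e * gg R G e) (gv R G v)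

/-- The Leavitt path algebra of the graph `G` over `R`. -/
abbrev LPA (G : DGraph) : Type := RingQuot (LRel R G)

def Vq (G : DGraph) (v : G.V) : LPA R G := RingQuot.mkAlgHom R (LRel R G) (gv R G v)
def Eq' (G : DGraph) (e : G.E) : LPA R G := RingQuot.mkAlgHom R (LRel R G) (ge R G e)
def Gq (G : DGraph) (e : G.E) : LPA R G := RingQuot.mkAlgHom R (LRel R G) (gg R G e)

def Step (G : DGraph) (v w : G.V) : Prop := ∃ e : G.E, G.s e = v ∧ G.r e = w
def Reaches (G : DGraph) : G.V → G.V → Prop := Relation.ReflTransGen (Step G)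
def Hereditary (G : DGraph) (H : Set G.V) : Prop := ∀ v ∈ H, ∀ w, Reaches G v w → w ∈ H
def HClosure (G : DGraph) (X : Set G.V) : Set G.V := {w | ∃ v ∈ X, Reaches G v w}

def NoSinks (G : DGraph) : Prop := ∀ v : G.V, ∃ e, G.s e = v
def NoSources (G : DGraph) : Prop := ∀ v : G.V, ∃ e, G.r e = v
def FiniteGraph (G : DGraph) : Prop := Finite G.V ∧ Finite G.E

/-- `A` is (isomorphic to) an algebraic Cuntz–Krieger `R`-algebra. -/
def IsCKAlgebra (A : Type) [Ring A] [Algebra R A] : Prop :=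
  ∃ G : DGraph, FiniteGraph G ∧ NoSinks G ∧ NoSources G ∧ Nonempty (LPA R G ≃ₐ[R] A)

end DGraph

open DGraph

/-- `E(v₀,n)`: attach a head `vₙ → ⋯ → v₁ → v₀` at `v₀`. -/
def attachHead (G : DGraph) (v0 : G.V) (n : ℕ) : DGraph where
  V := G.V ⊕ Fin n
  E := G.E ⊕ Fin n
  s := Sum.elim (fun e => Sum.inl (G.s e)) (fun i => Sum.inr i)
  r := Sum.elim (fun e => Sum.inl (G.r e)) (fun i =>
    if _ : (i : ℕ) = 0 then Sum.inl v0
    else Sum.inr ⟨(i : ℕ) - 1, Nat.lt_of_le_of_lt (Nat.sub_le _ _) i.isLt⟩)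

/-- `E(e₀,n)`: replace the edge `e₀` by a path of length `n+1` through `n` new
vertices `v₁,…,vₙ` (index `j : Fin (n+1)` is the new edge `e_{j+1}`, index `i : Fin n`
is the new vertex `v_{i+1}`, and `v₀ := r(e₀)`).  So `s(e_{n+1}) = s(e₀)`,
`s(e_j) = v_j` for `j ≤ n`, `r(e_1) = r(e₀)`, and `r(e_j) = v_{j-1}` for `j ≥ 2`. -/
def elongate (G : DGraph) (e0 : G.E) (n : ℕ) : DGraph where
  V := G.V ⊕ Fin n
  E := {e : G.E // e ≠ e0} ⊕ Fin (n + 1)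
  s := Sum.elim (fun e => Sum.inl (G.s e.1)) (fun j =>
    if h : (j : ℕ) = n then Sum.inl (G.s e0)
    else Sum.inr ⟨(j : ℕ), lt_of_le_of_ne (Nat.lt_succ_iff.mp j.isLt) h⟩)
  r := Sum.elim (fun e => Sum.inl (G.r e.1)) (fun j =>
    if h : (j : ℕ) = 0 then Sum.inl (G.r e0)
    else Sum.inr ⟨(j : ℕ) - 1,
      Nat.lt_of_lt_of_le (Nat.sub_lt (Nat.pos_of_ne_zero h) one_pos)
        (Nat.lt_succ_iff.mp j.isLt)⟩)

/-!
The isomorphism is the identity on vertices and on the edges of `E` other than `e₀`, matches the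
head edge `vᵢ₊₁ → vᵢ` with the new edge `eᵢ₊₁`, and sends `e₀` to the path `eₙ₊₁ eₙ ⋯ e₁`; its
inverse sends `eₙ₊₁` to `e₀ f₁* ⋯ fₙ*`, where `fₙ ⋯ f₁` is the head. Both maps come from one
construction: a Leavitt family of a graph can be pulled back along a source-preserving bijection of
edges, provided every edge whose range moves is multiplied by a partial isometry between the two
range projections. The partial isometries used are the head paths `p`: always `p* p = r(p)`, and
`p p* = s(p)` because every vertex of the head emits exactly one edge.
-/

namespace DGraph

structure LeavittFamily (K : DGraph) (A : Type*) [Semiring A] where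
  v : K.V → A
  e : K.E → A
  g : K.E → A
  v_mul_self : ∀ u, v u * v u = v u
  v_mul_v_of_ne : ∀ {u u'}, u ≠ u' → v u * v u' = 0
  v_s_mul_e : ∀ x, v (K.s x) * e x = e x
  e_mul_v_r : ∀ x, e x * v (K.r x) = e x
  v_r_mul_g : ∀ x, v (K.r x) * g x = g x
  g_mul_v_s : ∀ x, g x * v (K.s x) = g x
  g_mul_e_self : ∀ x, g x * e x = v (K.r x)
  g_mul_e_of_ne : ∀ {x y}, x ≠ y → g x * e y = 0
  sum_e_mul_g : ∀ u (h : IsRegular K u), ∑ x ∈ h.1.toFinset, e x * g x = v u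

/-- `α k ⋯ α 1 α 0` is a path: it is traversed from `α k` down to `α 0`. -/
def IsPath (K : DGraph) (α : ℕ → K.E) (k : ℕ) : Prop :=
  ∀ i < k, K.r (α (i + 1)) = K.s (α i)

section UniversalProperty

variable (R : Type) [CommRing R] {K : DGraph} {A : Type*} [Semiring A] [Algebra R A]

namespace LeavittFamily

variable (F : LeavittFamily K A)

def gen : Gen K → A
  | .vert u => F.v u
  | .edge x => F.e x
  | .ghost x => F.g x

theorem lift_gen_rel ⦃a b : FA R K⦄ (h : LRel R K a b) :
    FreeAlgebra.lift R F.gen a = FreeAlgebra.lift R F.gen b := by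
  induction h with
  | vmul u u' =>
    by_cases hu : u = u'
    · subst hu; simpa [gv, gen] using F.v_mul_self u
    · simpa [gv, gen, hu] using F.v_mul_v_of_ne hu
  | se x => simpa [gv, ge, gen] using F.v_s_mul_e x
  | er x => simpa [gv, ge, gen] using F.e_mul_v_r x
  | rg x => simpa [gv, gg, gen] using F.v_r_mul_g x
  | gs x => simpa [gv, gg, gen] using F.g_mul_v_s x
  | ck1 x y =>
    by_cases hxy : x = y
    · subst hxy; simpa [gv, ge, gg, gen] using F.g_mul_e_self x
    · simpa [ge, gg, gen, hxy] using F.g_mul_e_of_ne hxy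
  | ck2 u h => simpa [gv, ge, gg, gen] using F.sum_e_mul_g u h

def lift : LPA R K →ₐ[R] A :=
  RingQuot.liftAlgHom R ⟨FreeAlgebra.lift R F.gen, F.lift_gen_rel R⟩

@[simp] theorem lift_Vq (u : K.V) : F.lift R (Vq R K u) = F.v u := by
  simp [lift, Vq, gv, gen]

@[simp] theorem lift_Eq' (x : K.E) : F.lift R (Eq' R K x) = F.e x := by
  simp [lift, Eq', ge, gen]

@[simp] theorem lift_Gq (x : K.E) : F.lift R (Gq R K x) = F.g x := by
  simp [lift, Gq, gg, gen]

end LeavittFamily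

def lpaFamily (K : DGraph) : LeavittFamily K (LPA R K) where
  v := Vq R K
  e := Eq' R K
  g := Gq R K
  v_mul_self u := by simpa [Vq] using RingQuot.mkAlgHom_rel R (LRel.vmul (R := R) u u)
  v_mul_v_of_ne {u u'} h := by
    simpa [Vq, h] using RingQuot.mkAlgHom_rel R (LRel.vmul (R := R) u u')
  v_s_mul_e x := by simpa [Vq, Eq'] using RingQuot.mkAlgHom_rel R (LRel.se (R := R) x)
  e_mul_v_r x := by simpa [Vq, Eq'] using RingQuot.mkAlgHom_rel R (LRel.er (R := R) x)
  v_r_mul_g x := by simpa [Vq, Gq] using RingQuot.mkAlgHom_rel R (LRel.rg (R := R) x)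
  g_mul_v_s x := by simpa [Vq, Gq] using RingQuot.mkAlgHom_rel R (LRel.gs (R := R) x)
  g_mul_e_self x := by
    simpa [Vq, Eq', Gq] using RingQuot.mkAlgHom_rel R (LRel.ck1 (R := R) x x)
  g_mul_e_of_ne {x y} h := by
    simpa [Eq', Gq, h] using RingQuot.mkAlgHom_rel R (LRel.ck1 (R := R) x y)
  sum_e_mul_g u h := by
    simpa [Vq, Eq', Gq] using RingQuot.mkAlgHom_rel R (LRel.ck2 (R := R) u h)

@[simp] theorem lpaFamily_v : (lpaFamily R K).v = Vq R K := rfl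

@[simp] theorem lpaFamily_e : (lpaFamily R K).e = Eq' R K := rfl

@[simp] theorem lpaFamily_g : (lpaFamily R K).g = Gq R K := rfl

theorem LPA.algHom_ext {f f' : LPA R K →ₐ[R] A}
    (hv : ∀ u, f (Vq R K u) = f' (Vq R K u)) (he : ∀ x, f (Eq' R K x) = f' (Eq' R K x))
    (hg : ∀ x, f (Gq R K x) = f' (Gq R K x)) : f = f' := by
  refine RingQuot.ringQuot_ext' R f f' (FreeAlgebra.hom_ext (funext fun a => ?_))
  cases a with
  | vert u => exact hv u
  | edge x => exact he x
  | ghost x => exact hg x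

end UniversalProperty

namespace LeavittFamily

variable {K K' : DGraph} {A B : Type*} [Semiring A] [Semiring B] (F : LeavittFamily K A)

section Paths

theorem e_mul_g_of_unique {x : K.E} (hx : ∀ y, K.s y = K.s x → y = x) :
    F.e x * F.g x = F.v (K.s x) := by
  have hset : {y | K.s y = K.s x} = {x} := Set.ext fun y => ⟨hx y, fun h => h ▸ rfl⟩
  have hreg : IsRegular K (K.s x) := ⟨hset ▸ Set.finite_singleton x, x, rfl⟩
  rw [← F.sum_e_mul_g _ hreg]
  simp [hset]

def path (α : ℕ → K.E) : ℕ → A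
  | 0 => F.e (α 0)
  | k + 1 => F.e (α (k + 1)) * path α k

def ghostPath (α : ℕ → K.E) : ℕ → A
  | 0 => F.g (α 0)
  | k + 1 => ghostPath α k * F.g (α (k + 1))

variable (α : ℕ → K.E)

theorem path_mul_v_r : ∀ k, F.path α k * F.v (K.r (α 0)) = F.path α k
  | 0 => F.e_mul_v_r _
  | k + 1 => by rw [path, mul_assoc, path_mul_v_r k]

theorem v_r_mul_ghostPath : ∀ k, F.v (K.r (α 0)) * F.ghostPath α k = F.ghostPath α k
  | 0 => F.v_r_mul_g _
  | k + 1 => by rw [ghostPath, ← mul_assoc, v_r_mul_ghostPath k]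

theorem v_s_mul_path : ∀ k, F.v (K.s (α k)) * F.path α k = F.path α k
  | 0 => F.v_s_mul_e _
  | k + 1 => by rw [path, ← mul_assoc, F.v_s_mul_e]

theorem ghostPath_mul_v_s : ∀ k, F.ghostPath α k * F.v (K.s (α k)) = F.ghostPath α k
  | 0 => F.g_mul_v_s _
  | k + 1 => by rw [ghostPath, mul_assoc, F.g_mul_v_s]

theorem ghostPath_mul_path :
    ∀ k, IsPath K α k → F.ghostPath α k * F.path α k = F.v (K.r (α 0))
  | 0, _ => F.g_mul_e_self _
  | k + 1, hα => by
    rw [ghostPath, path]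
    calc F.ghostPath α k * F.g (α (k + 1)) * (F.e (α (k + 1)) * F.path α k)
        = F.ghostPath α k * (F.g (α (k + 1)) * F.e (α (k + 1))) * F.path α k := by
          simp only [mul_assoc]
      _ = F.ghostPath α k * F.path α k := by
          rw [F.g_mul_e_self, hα k k.lt_succ_self, ghostPath_mul_v_s]
      _ = F.v (K.r (α 0)) := ghostPath_mul_path k fun i hi => hα i (hi.trans k.lt_succ_self)

theorem path_mul_ghostPath :
    ∀ k, IsPath K α k → (∀ i ≤ k, ∀ y, K.s y = K.s (α i) → y = α i) →
      F.path α k * F.ghostPath α k = F.v (K.s (α k))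
  | 0, _, huniq => F.e_mul_g_of_unique (huniq 0 le_rfl)
  | k + 1, hα, huniq => by
    rw [path, ghostPath]
    calc F.e (α (k + 1)) * F.path α k * (F.ghostPath α k * F.g (α (k + 1)))
        = F.e (α (k + 1)) * (F.path α k * F.ghostPath α k) * F.g (α (k + 1)) := by
          simp only [mul_assoc]
      _ = F.e (α (k + 1)) * F.g (α (k + 1)) := by
          rw [path_mul_ghostPath k (fun i hi => hα i (hi.trans k.lt_succ_self))
            (fun i hi => huniq i (hi.trans k.le_succ)), ← hα k k.lt_succ_self, F.e_mul_v_r]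
      _ = F.v (K.s (α (k + 1))) := F.e_mul_g_of_unique (huniq (k + 1) le_rfl)

variable {F α} {F' : LeavittFamily K' B} {β : ℕ → K'.E}
  {Φ : Type*} [FunLike Φ A B] [MulHomClass Φ A B]

theorem map_path (f : Φ) {k : ℕ} (h : ∀ i ≤ k, f (F.e (α i)) = F'.e (β i)) :
    f (F.path α k) = F'.path β k := by
  induction k with
  | zero => exact h 0 le_rfl
  | succ k ih => rw [path, path, map_mul, h _ le_rfl, ih fun i hi => h i (hi.trans k.le_succ)]

theorem map_ghostPath (f : Φ) {k : ℕ} (h : ∀ i ≤ k, f (F.g (α i)) = F'.g (β i)) :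
    f (F.ghostPath α k) = F'.ghostPath β k := by
  induction k with
  | zero => exact h 0 le_rfl
  | succ k ih =>
    rw [ghostPath, ghostPath, map_mul, h _ le_rfl, ih fun i hi => h i (hi.trans k.le_succ)]

end Paths

section Twist

def twist (φ : K'.V → K.V) (hφ : Function.Injective φ) (b : K'.E ≃ K.E)
    (hs : ∀ x, K.s (b x) = φ (K'.s x)) (w w' : K'.E → A)
    (hw'w : ∀ x, w' x * w x = F.v (φ (K'.r x))) (hww' : ∀ x, w x * w' x = F.v (K.r (b x)))
    (hw : ∀ x, w x * F.v (φ (K'.r x)) = w x) (hw' : ∀ x, F.v (φ (K'.r x)) * w' x = w' x) :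
    LeavittFamily K' A where
  v u := F.v (φ u)
  e x := F.e (b x) * w x
  g x := w' x * F.g (b x)
  v_mul_self u := F.v_mul_self _
  v_mul_v_of_ne h := F.v_mul_v_of_ne (hφ.ne h)
  v_s_mul_e x := by rw [← hs, ← mul_assoc, F.v_s_mul_e]
  e_mul_v_r x := by rw [mul_assoc, hw]
  v_r_mul_g x := by rw [← mul_assoc, hw']
  g_mul_v_s x := by rw [← hs, mul_assoc, F.g_mul_v_s]
  g_mul_e_self x := by
    calc w' x * F.g (b x) * (F.e (b x) * w x) = w' x * (F.g (b x) * F.e (b x)) * w x := by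
          simp only [mul_assoc]
      _ = w' x * w x * (w' x * w x) := by rw [F.g_mul_e_self, ← hww']; simp only [mul_assoc]
      _ = F.v (φ (K'.r x)) := by rw [hw'w, F.v_mul_self]
  g_mul_e_of_ne h := by
    rw [mul_assoc, ← mul_assoc (F.g _), F.g_mul_e_of_ne (b.injective.ne h), zero_mul, mul_zero]
  sum_e_mul_g u hu := by
    have hmem : ∀ x, K'.s x = u ↔ K.s (b x) = φ u := fun x => by rw [hs, hφ.eq_iff]
    have hset : {y | K.s y = φ u} = b '' {x | K'.s x = u} := by
      ext y; simp [b.image_eq_preimage_symm, hmem]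
    have hreg : IsRegular K (φ u) := ⟨hset ▸ hu.1.image b, hset ▸ hu.2.image b⟩
    rw [← F.sum_e_mul_g _ hreg]
    refine Finset.sum_equiv b (fun x => by simp [hmem]) fun x _ => ?_
    rw [mul_assoc, ← mul_assoc (w x), hww', ← mul_assoc, F.e_mul_v_r]

open Classical in
def twistAt (φ : K'.V → K.V) (hφ : Function.Injective φ) (b : K'.E ≃ K.E)
    (hs : ∀ x, K.s (b x) = φ (K'.s x)) (x₀ : K'.E)
    (hr : ∀ x ≠ x₀, K.r (b x) = φ (K'.r x)) (w w' : A)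
    (hw'w : w' * w = F.v (φ (K'.r x₀))) (hww' : w * w' = F.v (K.r (b x₀)))
    (hw : w * F.v (φ (K'.r x₀)) = w) (hw' : F.v (φ (K'.r x₀)) * w' = w') :
    LeavittFamily K' A :=
  F.twist φ hφ b hs (fun x => if x = x₀ then w else F.v (φ (K'.r x)))
    (fun x => if x = x₀ then w' else F.v (φ (K'.r x)))
    (fun x => by
      split_ifs with hx
      · exact hx ▸ hw'w
      · exact F.v_mul_self _)
    (fun x => by
      split_ifs with hx
      · exact hx ▸ hww'
      · rw [F.v_mul_self, hr x hx])
    (fun x => by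
      split_ifs with hx
      · exact hx ▸ hw
      · exact F.v_mul_self _)
    (fun x => by
      split_ifs with hx
      · exact hx ▸ hw'
      · exact F.v_mul_self _)

variable {φ : K'.V → K.V} {hφ : Function.Injective φ} {b : K'.E ≃ K.E}
  {hs : ∀ x, K.s (b x) = φ (K'.s x)} {x₀ : K'.E} {hr : ∀ x ≠ x₀, K.r (b x) = φ (K'.r x)}
  {w w' : A} {hw'w : w' * w = F.v (φ (K'.r x₀))} {hww' : w * w' = F.v (K.r (b x₀))}
  {hw : w * F.v (φ (K'.r x₀)) = w} {hw' : F.v (φ (K'.r x₀)) * w' = w'}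

@[simp] theorem twistAt_v (u : K'.V) :
    (F.twistAt φ hφ b hs x₀ hr w w' hw'w hww' hw hw').v u = F.v (φ u) := rfl

theorem twistAt_e_self :
    (F.twistAt φ hφ b hs x₀ hr w w' hw'w hww' hw hw').e x₀ = F.e (b x₀) * w :=
  congrArg (F.e (b x₀) * ·) (if_pos rfl)

theorem twistAt_g_self :
    (F.twistAt φ hφ b hs x₀ hr w w' hw'w hww' hw hw').g x₀ = w' * F.g (b x₀) :=
  congrArg (· * F.g (b x₀)) (if_pos rfl)

theorem twistAt_e_of_ne {x : K'.E} (hx : x ≠ x₀) :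
    (F.twistAt φ hφ b hs x₀ hr w w' hw'w hww' hw hw').e x = F.e (b x) := by
  simp only [twistAt, twist, if_neg hx]
  rw [← hr x hx, F.e_mul_v_r]

theorem twistAt_g_of_ne {x : K'.E} (hx : x ≠ x₀) :
    (F.twistAt φ hφ b hs x₀ hr w w' hw'w hww' hw hw').g x = F.g (b x) := by
  simp only [twistAt, twist, if_neg hx]
  rw [← hr x hx, F.v_r_mul_g]

end Twist

end LeavittFamily

end DGraph

-- Unfolding the two graphs lets their vertices and edges be used as elements of the sum types.
attribute [reducible] attachHead elongate

namespace DGraph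

section Graphs

open Classical in
def elongateEdgeEquiv {E : Type} (e₀ : E) (n : ℕ) :
    E ⊕ Fin n ≃ {e // e ≠ e₀} ⊕ Fin (n + 1) where
  toFun := Sum.elim (fun e => if h : e = e₀ then .inr (Fin.last n) else .inl ⟨e, h⟩)
    (fun i => .inr i.castSucc)
  invFun := Sum.elim (fun e => .inl e.1) (Fin.lastCases (.inl e₀) .inr)
  left_inv := by
    rintro (e | i)
    · by_cases h : e = e₀ <;> simp [h]
    · simp
  right_inv := by
    rintro (e | j)
    · simp [e.2]
    · cases j using Fin.lastCases <;> simp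

/-- `headEdge m i` is the head edge `vᵢ₊₁ → vᵢ`; the index is read modulo `m + 1`. -/
def headEdge {E : Type} (m i : ℕ) : E ⊕ Fin (m + 1) := .inr (Fin.ofNat (m + 1) i)

theorem headEdge_ne_inl {E : Type} {m i : ℕ} {e : E} : headEdge m i ≠ Sum.inl e :=
  Sum.inr_ne_inl

variable {G : DGraph} {e0 : G.E} {v0 : G.V} {n m : ℕ}

theorem elongate_s_edgeEquiv (x : G.E ⊕ Fin n) :
    (elongate G e0 n).s (elongateEdgeEquiv e0 n x) = (attachHead G v0 n).s x := by
  rcases x with e | i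
  · by_cases h : e = e0
    · subst h; simp [elongateEdgeEquiv, elongate]
    · simp [elongateEdgeEquiv, elongate, h]
  · simp [elongateEdgeEquiv, elongate, i.isLt.ne]

theorem elongate_r_edgeEquiv {x : G.E ⊕ Fin n} (hx : x ≠ .inl e0) :
    (elongate G e0 n).r (elongateEdgeEquiv e0 n x) = (attachHead G (G.r e0) n).r x := by
  rcases x with e | i
  · have h : e ≠ e0 := fun h => hx (h ▸ rfl)
    simp [elongateEdgeEquiv, elongate, h]
  · simp only [elongateEdgeEquiv, elongate, Equiv.coe_fn_mk, Sum.elim_inr,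
      Fin.val_castSucc]

theorem elongate_r_edgeEquiv_inl_self :
    (elongate G e0 (m + 1)).r (elongateEdgeEquiv e0 (m + 1) (.inl e0)) = .inr (Fin.last m) := by
  simp [elongateEdgeEquiv, elongate, Fin.last]

theorem attachHead_r_headEdge_zero : (attachHead G v0 (m + 1)).r (headEdge m 0) = .inl v0 := by
  simp [attachHead, headEdge]

theorem attachHead_s_headEdge_self :
    (attachHead G v0 (m + 1)).s (headEdge m m) = .inr (Fin.last m) := by
  simp [attachHead, headEdge]

theorem attachHead_isPath_headEdge : IsPath (attachHead G v0 (m + 1)) (headEdge m) m := by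
  intro i hi
  have h1 : Fin.ofNat (m + 1) (i + 1) = ⟨i + 1, by omega⟩ :=
    Fin.ext (Nat.mod_eq_of_lt (by omega))
  have h0 : Fin.ofNat (m + 1) i = ⟨i, by omega⟩ := Fin.ext (Nat.mod_eq_of_lt (by omega))
  simp only [headEdge, h1, h0, attachHead, Sum.elim_inr, dif_neg i.succ_ne_zero]
  rfl

theorem attachHead_eq_headEdge_of_s_eq (i : ℕ) (y : G.E ⊕ Fin (m + 1))
    (h : (attachHead G v0 (m + 1)).s y = (attachHead G v0 (m + 1)).s (headEdge m i)) :
    y = headEdge m i := by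
  rcases y with e | j
  · simp [attachHead, headEdge] at h
  · simpa [attachHead, headEdge] using h

theorem elongate_isPath_headEdge :
    IsPath (elongate G e0 (m + 1)) (elongateEdgeEquiv e0 (m + 1) ∘ headEdge m) m := fun i hi => by
  rw [Function.comp_apply, Function.comp_apply, elongate_r_edgeEquiv headEdge_ne_inl,
    elongate_s_edgeEquiv (v0 := G.r e0)]
  exact attachHead_isPath_headEdge i hi

theorem elongate_eq_edgeEquiv_headEdge_of_s_eq (i : ℕ) (y : (elongate G e0 (m + 1)).E)
    (h : (elongate G e0 (m + 1)).s y =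
      (elongate G e0 (m + 1)).s (elongateEdgeEquiv e0 (m + 1) (headEdge m i))) :
    y = elongateEdgeEquiv e0 (m + 1) (headEdge m i) := by
  rw [← (elongateEdgeEquiv e0 (m + 1)).apply_symm_apply y, elongate_s_edgeEquiv (v0 := G.r e0),
    elongate_s_edgeEquiv (v0 := G.r e0)] at h
  rw [← attachHead_eq_headEdge_of_s_eq i _ h, Equiv.apply_symm_apply]

theorem elongate_r_headEdge_zero :
    (elongate G e0 (m + 1)).r (elongateEdgeEquiv e0 (m + 1) (headEdge m 0)) = .inl (G.r e0) := by
  rw [elongate_r_edgeEquiv headEdge_ne_inl, attachHead_r_headEdge_zero]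

theorem elongate_s_headEdge_self :
    (elongate G e0 (m + 1)).s (elongateEdgeEquiv e0 (m + 1) (headEdge m m)) =
      .inr (Fin.last m) := by
  rw [elongate_s_edgeEquiv (v0 := G.r e0), attachHead_s_headEdge_self]

theorem attachHead_s_edgeEquiv_symm (y : (elongate G e0 n).E) :
    (attachHead G v0 n).s ((elongateEdgeEquiv e0 n).symm y) = (elongate G e0 n).s y := by
  rw [← elongate_s_edgeEquiv (e0 := e0), Equiv.apply_symm_apply]

theorem attachHead_r_edgeEquiv_symm {y : (elongate G e0 n).E}
    (hy : y ≠ elongateEdgeEquiv e0 n (.inl e0)) :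
    (attachHead G (G.r e0) n).r ((elongateEdgeEquiv e0 n).symm y) = (elongate G e0 n).r y := by
  rw [← elongate_r_edgeEquiv ((Equiv.symm_apply_eq _).not.mpr hy), Equiv.apply_symm_apply]

end Graphs

section Isomorphism

open LeavittFamily

variable (R : Type) [CommRing R] (G : DGraph) (e0 : G.E) (m : ℕ)

local notation "𝓗" => attachHead G (G.r e0) (m + 1)
local notation "𝓛" => elongate G e0 (m + 1)
local notation "ε" => elongateEdgeEquiv e0 (m + 1)

def toElongate : LPA R 𝓗 →ₐ[R] LPA R 𝓛 :=
  ((lpaFamily R 𝓛).twistAt (K' := 𝓗) id Function.injective_id ε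
    elongate_s_edgeEquiv (Sum.inl e0) (fun _ hx => elongate_r_edgeEquiv hx)
    ((lpaFamily R 𝓛).path (ε ∘ headEdge m) m)
    ((lpaFamily R 𝓛).ghostPath (ε ∘ headEdge m) m)
    (by rw [ghostPath_mul_path _ _ _ elongate_isPath_headEdge, Function.comp_apply,
      elongate_r_headEdge_zero]; rfl)
    (by rw [path_mul_ghostPath _ _ _ elongate_isPath_headEdge
      fun i _ => elongate_eq_edgeEquiv_headEdge_of_s_eq i, Function.comp_apply,
      elongate_s_headEdge_self, elongate_r_edgeEquiv_inl_self])
    (by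
      show _ * Vq R 𝓛 (Sum.inl (G.r e0)) = _
      rw [← elongate_r_headEdge_zero]
      exact (lpaFamily R 𝓛).path_mul_v_r (ε ∘ headEdge m) m)
    (by
      show Vq R 𝓛 (Sum.inl (G.r e0)) * _ = _
      rw [← elongate_r_headEdge_zero]
      exact (lpaFamily R 𝓛).v_r_mul_ghostPath (ε ∘ headEdge m) m)).lift R

def ofElongate : LPA R 𝓛 →ₐ[R] LPA R 𝓗 :=
  ((lpaFamily R 𝓗).twistAt (K' := 𝓛) id Function.injective_id (ε).symm
    attachHead_s_edgeEquiv_symm (ε (Sum.inl e0)) (fun _ hy => attachHead_r_edgeEquiv_symm hy)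
    ((lpaFamily R 𝓗).ghostPath (headEdge m) m) ((lpaFamily R 𝓗).path (headEdge m) m)
    (by rw [path_mul_ghostPath _ _ _ attachHead_isPath_headEdge
      fun i _ => attachHead_eq_headEdge_of_s_eq i, attachHead_s_headEdge_self,
      elongate_r_edgeEquiv_inl_self]; rfl)
    (by rw [ghostPath_mul_path _ _ _ attachHead_isPath_headEdge, Equiv.symm_apply_apply,
      attachHead_r_headEdge_zero]; rfl)
    (by
      show _ * Vq R 𝓗 ((𝓛).r (ε (Sum.inl e0))) = _
      rw [elongate_r_edgeEquiv_inl_self, ← attachHead_s_headEdge_self (v0 := G.r e0)]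
      exact (lpaFamily R 𝓗).ghostPath_mul_v_s (headEdge m) m)
    (by
      show Vq R 𝓗 ((𝓛).r (ε (Sum.inl e0))) * _ = _
      rw [elongate_r_edgeEquiv_inl_self, ← attachHead_s_headEdge_self (v0 := G.r e0)]
      exact (lpaFamily R 𝓗).v_s_mul_path (headEdge m) m)).lift R

@[simp] theorem toElongate_Vq (u : (𝓗).V) : toElongate R G e0 m (Vq R 𝓗 u) = Vq R 𝓛 u := by
  simp [toElongate]

theorem toElongate_Eq'_of_ne {x : (𝓗).E} (hx : x ≠ Sum.inl e0) :
    toElongate R G e0 m (Eq' R 𝓗 x) = Eq' R 𝓛 (ε x) := by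
  rw [toElongate, lift_Eq', twistAt_e_of_ne _ hx]; rfl

theorem toElongate_Gq_of_ne {x : (𝓗).E} (hx : x ≠ Sum.inl e0) :
    toElongate R G e0 m (Gq R 𝓗 x) = Gq R 𝓛 (ε x) := by
  rw [toElongate, lift_Gq, twistAt_g_of_ne _ hx]; rfl

theorem toElongate_Eq'_inl_self : toElongate R G e0 m (Eq' R 𝓗 (Sum.inl e0)) =
    Eq' R 𝓛 (ε (Sum.inl e0)) * (lpaFamily R 𝓛).path (ε ∘ headEdge m) m := by
  rw [toElongate, lift_Eq', twistAt_e_self]; rfl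

theorem toElongate_Gq_inl_self : toElongate R G e0 m (Gq R 𝓗 (Sum.inl e0)) =
    (lpaFamily R 𝓛).ghostPath (ε ∘ headEdge m) m * Gq R 𝓛 (ε (Sum.inl e0)) := by
  rw [toElongate, lift_Gq, twistAt_g_self]; rfl

theorem toElongate_path : toElongate R G e0 m ((lpaFamily R 𝓗).path (headEdge m) m) =
    (lpaFamily R 𝓛).path (ε ∘ headEdge m) m :=
  map_path _ fun _ _ => toElongate_Eq'_of_ne R G e0 m headEdge_ne_inl

theorem toElongate_ghostPath : toElongate R G e0 m ((lpaFamily R 𝓗).ghostPath (headEdge m) m) =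
    (lpaFamily R 𝓛).ghostPath (ε ∘ headEdge m) m :=
  map_ghostPath _ fun _ _ => toElongate_Gq_of_ne R G e0 m headEdge_ne_inl

@[simp] theorem ofElongate_Vq (u : (𝓛).V) : ofElongate R G e0 m (Vq R 𝓛 u) = Vq R 𝓗 u := by
  simp [ofElongate]

theorem ofElongate_Eq'_of_ne {y : (𝓛).E} (hy : y ≠ ε (Sum.inl e0)) :
    ofElongate R G e0 m (Eq' R 𝓛 y) = Eq' R 𝓗 ((ε).symm y) := by
  rw [ofElongate, lift_Eq', twistAt_e_of_ne _ hy]; rfl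

theorem ofElongate_Gq_of_ne {y : (𝓛).E} (hy : y ≠ ε (Sum.inl e0)) :
    ofElongate R G e0 m (Gq R 𝓛 y) = Gq R 𝓗 ((ε).symm y) := by
  rw [ofElongate, lift_Gq, twistAt_g_of_ne _ hy]; rfl

theorem ofElongate_Eq'_edgeEquiv_inl_self : ofElongate R G e0 m (Eq' R 𝓛 (ε (Sum.inl e0))) =
    Eq' R 𝓗 (Sum.inl e0) * (lpaFamily R 𝓗).ghostPath (headEdge m) m := by
  rw [ofElongate, lift_Eq', twistAt_e_self, Equiv.symm_apply_apply]; rfl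

theorem ofElongate_Gq_edgeEquiv_inl_self : ofElongate R G e0 m (Gq R 𝓛 (ε (Sum.inl e0))) =
    (lpaFamily R 𝓗).path (headEdge m) m * Gq R 𝓗 (Sum.inl e0) := by
  rw [ofElongate, lift_Gq, twistAt_g_self, Equiv.symm_apply_apply]; rfl

theorem ofElongate_path : ofElongate R G e0 m ((lpaFamily R 𝓛).path (ε ∘ headEdge m) m) =
    (lpaFamily R 𝓗).path (headEdge m) m :=
  map_path _ fun _ _ => by
    rw [lpaFamily_e, Function.comp_apply, ofElongate_Eq'_of_ne R G e0 m
      ((ε).injective.ne headEdge_ne_inl), Equiv.symm_apply_apply]; rfl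

theorem ofElongate_ghostPath :
    ofElongate R G e0 m ((lpaFamily R 𝓛).ghostPath (ε ∘ headEdge m) m) =
      (lpaFamily R 𝓗).ghostPath (headEdge m) m :=
  map_ghostPath _ fun _ _ => by
    rw [lpaFamily_g, Function.comp_apply, ofElongate_Gq_of_ne R G e0 m
      ((ε).injective.ne headEdge_ne_inl), Equiv.symm_apply_apply]; rfl

theorem ofElongate_comp_toElongate :
    (ofElongate R G e0 m).comp (toElongate R G e0 m) = AlgHom.id R (LPA R 𝓗) := by
  refine LPA.algHom_ext R (fun u => by simp) (fun x => ?_) (fun x => ?_)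
  · by_cases hx : x = Sum.inl e0
    · subst hx
      rw [AlgHom.comp_apply, toElongate_Eq'_inl_self, map_mul, ofElongate_Eq'_edgeEquiv_inl_self,
        ofElongate_path, mul_assoc, ghostPath_mul_path _ _ _ attachHead_isPath_headEdge,
        attachHead_r_headEdge_zero]
      exact (lpaFamily R 𝓗).e_mul_v_r (Sum.inl e0)
    · rw [AlgHom.comp_apply, toElongate_Eq'_of_ne R G e0 m hx,
        ofElongate_Eq'_of_ne R G e0 m ((ε).injective.ne hx), Equiv.symm_apply_apply]; rfl
  · by_cases hx : x = Sum.inl e0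
    · subst hx
      rw [AlgHom.comp_apply, toElongate_Gq_inl_self, map_mul, ofElongate_Gq_edgeEquiv_inl_self,
        ofElongate_ghostPath, ← mul_assoc,
        ghostPath_mul_path _ _ _ attachHead_isPath_headEdge, attachHead_r_headEdge_zero]
      exact (lpaFamily R 𝓗).v_r_mul_g (Sum.inl e0)
    · rw [AlgHom.comp_apply, toElongate_Gq_of_ne R G e0 m hx,
        ofElongate_Gq_of_ne R G e0 m ((ε).injective.ne hx), Equiv.symm_apply_apply]; rfl

theorem toElongate_comp_ofElongate :
    (toElongate R G e0 m).comp (ofElongate R G e0 m) = AlgHom.id R (LPA R 𝓛) := by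
  have hpath := path_mul_ghostPath (lpaFamily R 𝓛) _ _ elongate_isPath_headEdge
    fun i _ => elongate_eq_edgeEquiv_headEdge_of_s_eq i
  rw [Function.comp_apply, elongate_s_headEdge_self, ← elongate_r_edgeEquiv_inl_self] at hpath
  refine LPA.algHom_ext R (fun u => by simp) (fun y => ?_) (fun y => ?_)
  · by_cases hy : y = ε (Sum.inl e0)
    · subst hy
      rw [AlgHom.comp_apply, ofElongate_Eq'_edgeEquiv_inl_self, map_mul, toElongate_Eq'_inl_self,
        toElongate_ghostPath, mul_assoc, hpath]
      exact (lpaFamily R 𝓛).e_mul_v_r _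
    · have hx : (ε).symm y ≠ Sum.inl e0 := (Equiv.symm_apply_eq _).not.mpr hy
      rw [AlgHom.comp_apply, ofElongate_Eq'_of_ne R G e0 m hy, toElongate_Eq'_of_ne R G e0 m hx,
        Equiv.apply_symm_apply]; rfl
  · by_cases hy : y = ε (Sum.inl e0)
    · subst hy
      rw [AlgHom.comp_apply, ofElongate_Gq_edgeEquiv_inl_self, map_mul, toElongate_Gq_inl_self,
        toElongate_path, ← mul_assoc, hpath]
      exact (lpaFamily R 𝓛).v_r_mul_g _
    · have hx : (ε).symm y ≠ Sum.inl e0 := (Equiv.symm_apply_eq _).not.mpr hy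
      rw [AlgHom.comp_apply, ofElongate_Gq_of_ne R G e0 m hy, toElongate_Gq_of_ne R G e0 m hx,
        Equiv.apply_symm_apply]; rfl

def attachHeadAlgEquivElongate : LPA R 𝓗 ≃ₐ[R] LPA R 𝓛 :=
  AlgEquiv.ofAlgHom (toElongate R G e0 m) (ofElongate R G e0 m)
    (toElongate_comp_ofElongate R G e0 m) (ofElongate_comp_toElongate R G e0 m)

end Isomorphism

end DGraph

theorem stmt2 (R : Type) [CommRing R] (G : DGraph) (e0 : G.E) (n : ℕ) (hn : 0 < n) :
    Nonempty (LPA R (attachHead G (G.r e0) n) ≃ₐ[R] LPA R (elongate G e0 n)) := by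
  obtain ⟨m, rfl⟩ := Nat.exists_eq_add_one.mpr hn
  exact ⟨attachHeadAlgEquivElongate R G e0 m⟩
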